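/- Let K > 1, 0 < R < 1 and S > 0, and suppose |ω_i| ≤ K·R^i and |ω_{−i}| ≤ K·S^i for all i ≥ 1. Let 0 < c < (1 + K²·(R+S)²)^{−1/2}. Then ∑_{η,ν} |v_{η,ν}(ω)|²·c^{2‖ν‖} < ∞, the sum extending over all pairs of multi-indices; equivalently, the operator B(ω) on H with matrix elements ⟨e_η, B(ω)e_ν⟩ = v_{η,ν}(ω)·c^{‖ν‖} (i.e. B(ω) = V(ω)·c^{N} with N the number operator, N e_ν = ‖ν‖·e_ν) is a Hilbert–Schmidt operator. -/

import Mathlib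

/-- A multi-index: a finitely supported function from the positive integers to `ℕ`. -/
abbrev MultiIndex := ℕ+ →₀ ℕ

/-- The polynomial `m_{n,m}(x,y) = ∑_{j=0}^{min(n,m)} (n choose j)(m choose j) j! x^{n-j} y^{m-j}`. -/
def mPoly {R : Type*} [CommSemiring R] (n m : ℕ) (x y : R) : R :=
  ∑ j ∈ Finset.range (min n m + 1),
    (n.choose j : R) * (m.choose j : R) * (Nat.factorial j : R) * x ^ (n - j) * y ^ (m - j)

/-- `η! = ∏_{i≥1} η_i!`. -/
def miFact (η : MultiIndex) : ℕ := ∏ i ∈ η.support, Nat.factorial (η i)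

/-- The matrix element `v_{η,ν}(ω) = (η!·ν!)^{-1/2} ∏_{i≥1} m_{η_i,ν_i}(ω_i, -ω_{-i})`;
the product is finite since `m_{0,0} = 1`. -/
noncomputable def vElem (ωp ωm : ℕ+ → ℂ) (η ν : MultiIndex) : ℂ :=
  ((1 / Real.sqrt ((miFact η : ℝ) * (miFact ν : ℝ))) : ℝ) *
    ∏ i ∈ η.support ∪ ν.support, mPoly (η i) (ν i) (ωp i) (-ωm i)

/-- The weight `‖η‖ = ∑_{i≥1} i·η_i` of a multi-index. -/
def miWt (η : MultiIndex) : ℕ := ∑ i ∈ η.support, (i : ℕ) * η i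

/-!
The squared matrix element factorizes over modes: `|v_{η,ν}(ω)|² c^{2‖ν‖} ≤ ∏ᵢ wᵢ(ηᵢ, νᵢ)` with
`wᵢ(n, m) = m_{n,m}(aᵢ, bᵢ)² tᵢ^m / (n! m!)`, where `aᵢ = K Rⁱ`, `bᵢ = K Sⁱ` and `tᵢ = c^{2i}`.
Hence every finite part of the double series is bounded by a finite product `∏ᵢ ∑_{n,m} wᵢ(n, m)`.
For a single mode, the generating-function identity
`∑ₙ m_{n,m}(a,b) m_{n,m'}(a,b) / n! = e^{a²} m_{m,m'}(a+b, a+b)` and the bound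
`m_{m,m}(s,s) ≤ m! (1 + s²)^m` give `∑_{n,m} wᵢ(n, m) ≤ e^{aᵢ²} / (1 - ρⁱ)` with
`ρ = (1 + K²(R+S)²) c² < 1`. Since `∑ᵢ aᵢ²` and `∑ᵢ ρⁱ` converge, these products stay bounded.
-/

open Finset Nat

section Algebra

variable {R : Type*}

lemma mPoly_eq_sum_range [CommSemiring R] {n m N : ℕ} (hN : min n m + 1 ≤ N) (x y : R) :
    mPoly n m x y = ∑ j ∈ range N,
      (n.choose j : R) * (m.choose j : R) * (j ! : R) * x ^ (n - j) * y ^ (m - j) := by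
  refine sum_subset (range_subset_range.2 hN) fun j _ hj => ?_
  rcases lt_or_ge n j with h | h
  · simp [choose_eq_zero_of_lt h]
  · simp [choose_eq_zero_of_lt (show m < j by rw [mem_range] at hj; omega)]

lemma mPoly_comm [CommSemiring R] (n m : ℕ) (x y : R) : mPoly n m x y = mPoly m n y x := by
  rw [mPoly, mPoly, min_comm]
  exact sum_congr rfl fun j _ => by ring

@[simp]
lemma mPoly_zero_right [CommSemiring R] (n : ℕ) (x y : R) : mPoly n 0 x y = x ^ n := by
  simp [mPoly]

lemma choose_succ_mul_factorial_succ (n k : ℕ) :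
    n.choose (k + 1) * (k + 1)! = n * ((n - 1).choose k * k !) := by
  cases n with
  | zero => simp
  | succ n =>
    rw [mul_comm, ← descFactorial_eq_factorial_mul_choose, Nat.add_sub_cancel, mul_comm _ k !,
      ← descFactorial_eq_factorial_mul_choose, succ_descFactorial_succ]

lemma mPoly_succ_right [CommRing R] (n m : ℕ) (x y : R) :
    mPoly n (m + 1) x y = y * mPoly n m x y + n * mPoly (n - 1) m x y := by
  have hterm : ∀ k : ℕ,
      (n.choose (k + 1) : R) * ((m + 1).choose (k + 1) : R) * ((k + 1)! : R)
          * x ^ (n - (k + 1)) * y ^ (m + 1 - (k + 1))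
        = y * ((n.choose (k + 1) : R) * (m.choose (k + 1) : R) * ((k + 1)! : R)
            * x ^ (n - (k + 1)) * y ^ (m - (k + 1)))
          + n * (((n - 1).choose k : R) * (m.choose k : R) * (k ! : R)
            * x ^ (n - 1 - k) * y ^ (m - k)) := by
    intro k
    have hfac : (n.choose (k + 1) : R) * ((k + 1)! : R) = n * ((n - 1).choose k * k ! : R) := by
      exact_mod_cast congrArg (Nat.cast (R := R)) (choose_succ_mul_factorial_succ n k)
    rw [choose_succ_succ, show n - (k + 1) = n - 1 - k by omega,
      show m + 1 - (k + 1) = m - k by omega]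
    push_cast
    rcases lt_or_ge k m with h | h
    · rw [show m - k = m - (k + 1) + 1 by omega, pow_succ]
      linear_combination ((m.choose k : R) * x ^ (n - 1 - k) * y ^ (m - (k + 1)) * y) * hfac
    · rw [choose_eq_zero_of_lt (show m < k + 1 by omega), show m - k = 0 by omega]
      push_cast
      linear_combination ((m.choose k : R) * x ^ (n - 1 - k)) * hfac
  rw [mPoly_eq_sum_range (N := n + m + 2) (by omega),
    mPoly_eq_sum_range (N := n + m + 2) (by omega), mPoly_eq_sum_range (N := n + m + 1) (by omega), sum_range_succ' _ (n + m + 1),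
    sum_range_succ' _ (n + m + 1)]
  simp only [hterm, sum_add_distrib, mul_add, mul_sum]
  simp only [choose_zero_right, cast_one, mul_one, factorial_zero, tsub_zero, one_mul, pow_succ]
  ring

lemma mPoly_succ_left [CommRing R] (n m : ℕ) (x y : R) :
    mPoly (n + 1) m x y = x * mPoly n m x y + m * mPoly n (m - 1) x y := by
  rw [mPoly_comm, mPoly_succ_right, mPoly_comm n, mPoly_comm n]

end Algebra

section Estimates

lemma norm_mPoly_le {R : Type*} [SeminormedCommRing R] [NormOneClass R] (n m : ℕ) (x y : R) :
    ‖mPoly n m x y‖ ≤ mPoly n m ‖x‖ ‖y‖ := by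
  refine (norm_sum_le _ _).trans (sum_le_sum fun j _ => ?_)
  refine (norm_mul_le _ _).trans (mul_le_mul ?_ (norm_pow_le _ _) (norm_nonneg _) (by positivity))
  refine (norm_mul_le _ _).trans (mul_le_mul ?_ (norm_pow_le _ _) (norm_nonneg _) (by positivity))
  refine (norm_mul_le _ _).trans (mul_le_mul ?_ ?_ (norm_nonneg _) (by positivity))
  · refine (norm_mul_le _ _).trans (mul_le_mul ?_ ?_ (norm_nonneg _) (by positivity)) <;>
      simpa using Nat.norm_cast_le (α := R) _
  · simpa using Nat.norm_cast_le (α := R) _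

variable {x y x' y' : ℝ}

lemma mPoly_le_mPoly {n m : ℕ} (hx : 0 ≤ x) (hy : 0 ≤ y) (hxx' : x ≤ x') (hyy' : y ≤ y') :
    mPoly n m x y ≤ mPoly n m x' y' := by
  have := hx.trans hxx'
  exact sum_le_sum fun _ _ => by gcongr

end Estimates

section GeneratingIdentity

open Real

variable {a b : ℝ}

lemma hasSum_mPoly_mul_mPoly_succ_left {m m' : ℕ}
    (h : HasSum (fun n => mPoly n m a b * mPoly n m' a b / n !)
      (exp (a ^ 2) * mPoly m m' (a + b) (a + b)))
    (h' : HasSum (fun n => mPoly n m a b * mPoly n (m' - 1) a b / n !)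
      (exp (a ^ 2) * mPoly m (m' - 1) (a + b) (a + b))) :
    HasSum (fun n => mPoly n (m + 1) a b * mPoly n m' a b / n !)
      (exp (a ^ 2) * mPoly (m + 1) m' (a + b) (a + b)) := by
  -- `n / n! = 1 / (n - 1)!`: after reindexing `n = k + 1` the recurrence in the first index
  -- applies to `mPoly (k + 1) m' a b`
  have hshift : HasSum (fun n : ℕ => n * mPoly (n - 1) m a b * mPoly n m' a b / n !)
      (a * (exp (a ^ 2) * mPoly m m' (a + b) (a + b))
        + m' * (exp (a ^ 2) * mPoly m (m' - 1) (a + b) (a + b))) := by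
    rw [← hasSum_nat_add_iff' 1, sum_range_one, cast_zero, zero_mul, zero_mul, zero_div, sub_zero]
    refine ((h.mul_left a).add (h'.mul_left (m' : ℝ))).congr_fun fun k => ?_
    rw [Nat.add_sub_cancel, mPoly_succ_left, factorial_succ]
    push_cast
    field_simp
  rw [show exp (a ^ 2) * mPoly (m + 1) m' (a + b) (a + b)
      = b * (exp (a ^ 2) * mPoly m m' (a + b) (a + b))
        + (a * (exp (a ^ 2) * mPoly m m' (a + b) (a + b))
          + m' * (exp (a ^ 2) * mPoly m (m' - 1) (a + b) (a + b))) by rw [mPoly_succ_left]; ring]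
  refine ((h.mul_left b).add hshift).congr_fun fun n => ?_
  rw [mPoly_succ_right]
  ring

lemma hasSum_mPoly_mul_mPoly_comm {m m' : ℕ}
    (h : HasSum (fun n => mPoly n m a b * mPoly n m' a b / n !)
      (exp (a ^ 2) * mPoly m m' (a + b) (a + b))) :
    HasSum (fun n => mPoly n m' a b * mPoly n m a b / n !)
      (exp (a ^ 2) * mPoly m' m (a + b) (a + b)) := by
  simpa only [mul_comm (mPoly _ m' a b), mPoly_comm m] using h

lemma hasSum_mPoly_mul_mPoly_zero_right (m : ℕ) :
    HasSum (fun n => mPoly n m a b * mPoly n 0 a b / n !)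
      (exp (a ^ 2) * mPoly m 0 (a + b) (a + b)) := by
  induction m with
  | zero =>
    simpa [← pow_add, ← two_mul, pow_mul, exp_eq_exp_ℝ]
      using NormedSpace.expSeries_div_hasSum_exp (a ^ 2)
  | succ m ih => exact hasSum_mPoly_mul_mPoly_succ_left ih ih

theorem hasSum_mPoly_mul_mPoly (a b : ℝ) (m m' : ℕ) :
    HasSum (fun n => mPoly n m a b * mPoly n m' a b / n !)
      (exp (a ^ 2) * mPoly m m' (a + b) (a + b)) := by
  induction m generalizing m' with
  | zero => exact hasSum_mPoly_mul_mPoly_comm (hasSum_mPoly_mul_mPoly_zero_right m')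
  | succ m ih => exact hasSum_mPoly_mul_mPoly_succ_left (ih m') (ih (m' - 1))

end GeneratingIdentity

section ModeWeight

open Real

noncomputable def modeWeight (a b t : ℝ) (n m : ℕ) : ℝ :=
  mPoly n m a b ^ 2 / (n ! * m !) * t ^ m

variable {a b t θ : ℝ}

@[simp]
lemma modeWeight_zero_zero (a b t : ℝ) : modeWeight a b t 0 0 = 1 := by
  simp [modeWeight]

lemma modeWeight_nonneg (ht : 0 ≤ t) (n m : ℕ) : 0 ≤ modeWeight a b t n m := by
  unfold modeWeight
  positivity

lemma mPoly_self_div_factorial_le (s : ℝ) (m : ℕ) :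
    mPoly m m s s / m ! ≤ (1 + s ^ 2) ^ m := by
  rw [div_le_iff₀ (by positivity), add_pow, sum_mul, mPoly, min_self]
  refine sum_le_sum fun j hj => ?_
  have hj : j ≤ m := by rw [mem_range] at hj; omega
  have hfac : (m.choose j : ℝ) * j ! ≤ m ! := by
    exact_mod_cast Nat.le_of_dvd (factorial_pos m)
      ⟨(m - j)!, (choose_mul_factorial_mul_factorial hj).symm⟩
  calc (m.choose j : ℝ) * m.choose j * j ! * s ^ (m - j) * s ^ (m - j)
      = m.choose j * ((m.choose j : ℝ) * j !) * (s ^ 2) ^ (m - j) := by ring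
    _ ≤ m.choose j * m ! * (s ^ 2) ^ (m - j) := by gcongr
    _ = 1 ^ j * (s ^ 2) ^ (m - j) * m.choose j * m ! := by ring

lemma hasSum_modeWeight (a b t : ℝ) (m : ℕ) :
    HasSum (fun n => modeWeight a b t n m)
      (exp (a ^ 2) * mPoly m m (a + b) (a + b) / m ! * t ^ m) :=
  (((hasSum_mPoly_mul_mPoly a b m m).div_const (m ! : ℝ)).mul_right (t ^ m)).congr_fun
    fun n => by rw [modeWeight]; ring

lemma sum_modeWeight_le (ht : 0 ≤ t)
    (hθ : (1 + (a + b) ^ 2) * t ≤ θ) (hθ1 : θ < 1) (u : Finset (ℕ × ℕ)) :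
    ∑ q ∈ u, modeWeight a b t q.1 q.2 ≤ exp (a ^ 2) * (1 - θ)⁻¹ := by
  classical
  have hθ0 : 0 ≤ θ := le_trans (by positivity) hθ
  have hcolumn (m : ℕ) (v : Finset ℕ) : ∑ n ∈ v, modeWeight a b t n m ≤ exp (a ^ 2) * θ ^ m :=
    calc ∑ n ∈ v, modeWeight a b t n m
        ≤ exp (a ^ 2) * mPoly m m (a + b) (a + b) / m ! * t ^ m :=
          sum_le_hasSum v (fun n _ => modeWeight_nonneg ht n m) (hasSum_modeWeight a b t m)
      _ ≤ exp (a ^ 2) * (1 + (a + b) ^ 2) ^ m * t ^ m := by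
          rw [mul_div_assoc]
          gcongr
          exact mPoly_self_div_factorial_le _ m
      _ ≤ exp (a ^ 2) * θ ^ m := by
          rw [mul_assoc, ← mul_pow]
          gcongr
  calc ∑ q ∈ u, modeWeight a b t q.1 q.2
      ≤ ∑ q ∈ u.image Prod.fst ×ˢ u.image Prod.snd, modeWeight a b t q.1 q.2 :=
        sum_le_sum_of_subset_of_nonneg subset_product fun q _ _ => modeWeight_nonneg ht _ _
    _ = ∑ m ∈ u.image Prod.snd, ∑ n ∈ u.image Prod.fst, modeWeight a b t n m :=
        sum_product_right _ _ _
    _ ≤ ∑ m ∈ u.image Prod.snd, exp (a ^ 2) * θ ^ m := sum_le_sum fun m _ => hcolumn m _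
    _ ≤ exp (a ^ 2) * (1 - θ)⁻¹ := by
        rw [← mul_sum, ← tsum_geometric_of_lt_one hθ0 hθ1]
        gcongr
        exact (summable_geometric_of_lt_one hθ0 hθ1).sum_le_tsum _ fun i _ => pow_nonneg hθ0 i

end ModeWeight

section MatrixElement

variable {η ν : MultiIndex} {s : Finset ℕ+}

lemma miFact_eq_prod (hη : η.support ⊆ s) : miFact η = ∏ i ∈ s, (η i)! :=
  Finsupp.prod_of_support_subset η hη (fun _ k => k !) fun _ _ => factorial_zero

lemma pow_miWt_eq_prod {M : Type*} [CommMonoid M] (x : M) (hν : ν.support ⊆ s) :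
    x ^ miWt ν = ∏ i ∈ s, (x ^ (i : ℕ)) ^ ν i := by
  rw [miWt, ← prod_pow_eq_pow_sum]
  simp_rw [pow_mul]
  exact Finsupp.prod_of_support_subset ν hν (fun i k => (x ^ (i : ℕ)) ^ k) fun _ _ => pow_zero _

lemma norm_vElem_sq (ωp ωm : ℕ+ → ℂ) (η ν : MultiIndex) :
    ‖vElem ωp ωm η ν‖ ^ 2 = ∏ i ∈ η.support ∪ ν.support,
      ‖mPoly (η i) (ν i) (ωp i) (-ωm i)‖ ^ 2 / ((η i)! * (ν i)!) := by
  rw [vElem, norm_mul, Complex.norm_real, norm_prod, Real.norm_eq_abs, mul_pow, sq_abs,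
    div_pow, one_pow, Real.sq_sqrt (by positivity), miFact_eq_prod subset_union_left,
    miFact_eq_prod subset_union_right, prod_div_distrib, ← prod_pow, prod_mul_distrib]
  push_cast
  ring

lemma norm_vElem_sq_mul_pow_le {ωp ωm : ℕ+ → ℂ} {a b : ℕ+ → ℝ}
    (ha : ∀ i, ‖ωp i‖ ≤ a i) (hb : ∀ i, ‖ωm i‖ ≤ b i) (c : ℝ) (η ν : MultiIndex) :
    ‖vElem ωp ωm η ν‖ ^ 2 * c ^ (2 * miWt ν)
      ≤ ∏ i ∈ η.support ∪ ν.support, modeWeight (a i) (b i) ((c ^ 2) ^ (i : ℕ)) (η i) (ν i) := by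
  rw [norm_vElem_sq, pow_mul, pow_miWt_eq_prod _ subset_union_right, ← prod_mul_distrib]
  refine prod_le_prod (fun i _ => by positivity) fun i _ => ?_
  have hmode : ‖mPoly (η i) (ν i) (ωp i) (-ωm i)‖ ≤ mPoly (η i) (ν i) (a i) (b i) :=
    (norm_mPoly_le _ _ _ _).trans <| mPoly_le_mPoly (norm_nonneg _) (norm_nonneg _) (ha i)
      ((norm_neg (ωm i)).trans_le (hb i))
  rw [modeWeight]
  gcongr

end MatrixElement

section FinsuppProd

open Real

variable {ι M N : Type*} [Zero M] [Zero N]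

lemma sum_finsupp_prod_eq_prod_sum {β : Type*} [CommSemiring β] (s : Finset ι)
    (t : ι → Finset M) (f : ι → M → β) :
    ∑ η ∈ s.finsupp t, ∏ i ∈ s, f i (η i) = ∏ i ∈ s, ∑ x ∈ t i, f i x := by
  classical
  rw [Finset.finsupp, sum_map, prod_sum]
  refine sum_congr rfl fun q _ => ?_
  rw [← prod_attach s]
  exact prod_congr rfl fun i _ => by rw [Function.Embedding.coeFn_mk, Finsupp.indicator_of_mem]

theorem summable_finsupp_prod {f : ι → M → ℝ} {ℓ : ι → ℝ} (hf : ∀ i x, 0 ≤ f i x)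
    (hf0 : ∀ i, f i 0 = 1) (hsum : ∀ i (u : Finset M), ∑ x ∈ u, f i x ≤ exp (ℓ i))
    (hℓ : Summable ℓ) :
    Summable fun η : ι →₀ M => η.prod f := by
  classical
  have hℓ0 (i : ι) : 0 ≤ ℓ i := by simpa [hf0] using hsum i {0}
  refine summable_of_sum_le (c := exp (∑' i, ℓ i)) (fun η => prod_nonneg fun i _ => hf _ _)
    fun T => ?_
  set s := T.biUnion Finsupp.support
  set A := T.biUnion fun η => s.image η
  have hT : T ⊆ s.finsupp fun _ => A := fun η hη => mem_finsupp_iff.2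
    ⟨subset_biUnion_of_mem _ hη, fun i hi => mem_biUnion.2 ⟨η, hη, mem_image_of_mem _ hi⟩⟩
  calc ∑ η ∈ T, η.prod f
      = ∑ η ∈ T, ∏ i ∈ s, f i (η i) := sum_congr rfl fun η hη =>
        Finsupp.prod_of_support_subset _ (subset_biUnion_of_mem _ hη) _ fun i _ => hf0 i
    _ ≤ ∑ η ∈ s.finsupp fun _ => A, ∏ i ∈ s, f i (η i) :=
        sum_le_sum_of_subset_of_nonneg hT fun η _ _ => prod_nonneg fun i _ => hf _ _
    _ = ∏ i ∈ s, ∑ x ∈ A, f i x := sum_finsupp_prod_eq_prod_sum s _ f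
    _ ≤ ∏ i ∈ s, exp (ℓ i) :=
        prod_le_prod (fun i _ => sum_nonneg fun x _ => hf i x) fun i _ => hsum i A
    _ = exp (∑ i ∈ s, ℓ i) := (exp_sum s ℓ).symm
    _ ≤ exp (∑' i, ℓ i) := exp_le_exp.2 (hℓ.sum_le_tsum s fun i _ => hℓ0 i)

theorem summable_prod_support_union [DecidableEq ι] {f : ι → M → N → ℝ} {ℓ : ι → ℝ}
    (hf : ∀ i x y, 0 ≤ f i x y) (hf0 : ∀ i, f i 0 0 = 1)
    (hsum : ∀ i (u : Finset (M × N)), ∑ q ∈ u, f i q.1 q.2 ≤ exp (ℓ i)) (hℓ : Summable ℓ) :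
    Summable fun p : (ι →₀ M) × (ι →₀ N) =>
      ∏ i ∈ p.1.support ∪ p.2.support, f i (p.1 i) (p.2 i) := by
  let zip (p : (ι →₀ M) × (ι →₀ N)) : ι →₀ M × N := Finsupp.zipWith Prod.mk rfl p.1 p.2
  have hzip : Function.Injective zip := fun p p' h => by
    ext i
    exacts [congrArg Prod.fst (DFunLike.congr_fun h i), congrArg Prod.snd (DFunLike.congr_fun h i)]
  refine ((summable_finsupp_prod (f := fun i (q : M × N) => f i q.1 q.2)
    (fun i q => hf i q.1 q.2) hf0 hsum hℓ).comp_injective hzip).congr fun p => ?_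
  exact Finsupp.prod_of_support_subset (zip p) Finsupp.support_zipWith (fun i q => f i q.1 q.2)
    fun i _ => hf0 i

end FinsuppProd

section ModeConstants

lemma inv_one_sub_le_exp_div {x ρ : ℝ} (hx : 0 ≤ x) (hxρ : x ≤ ρ) (hρ : ρ < 1) :
    (1 - x)⁻¹ ≤ Real.exp (x / (1 - ρ)) :=
  calc (1 - x)⁻¹ = 1 + x / (1 - x) := by field_simp [show 1 - x ≠ 0 by linarith]; ring
    _ ≤ 1 + x / (1 - ρ) := by gcongr
    _ ≤ Real.exp (x / (1 - ρ)) := by linarith [Real.add_one_le_exp (x / (1 - ρ))]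

lemma one_add_sq_mul_pow_le {K R S c : ℝ} (hK : 1 ≤ K) (hR : 0 ≤ R) (hS : 0 ≤ S) {n : ℕ}
    (hn : n ≠ 0) :
    (1 + (K * R ^ n + K * S ^ n) ^ 2) * (c ^ 2) ^ n ≤ ((1 + K ^ 2 * (R + S) ^ 2) * c ^ 2) ^ n := by
  rw [mul_pow]
  gcongr
  calc 1 + (K * R ^ n + K * S ^ n) ^ 2
      = 1 + K ^ 2 * (R ^ n + S ^ n) ^ 2 := by ring
    _ ≤ 1 + (K ^ 2) ^ n * ((R + S) ^ n) ^ 2 := by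
        gcongr
        · exact le_self_pow₀ (one_le_pow₀ hK) hn
        · exact pow_add_pow_le hR hS hn
    _ = 1 ^ n + (K ^ 2 * (R + S) ^ 2) ^ n := by rw [one_pow, mul_pow, pow_right_comm (R + S)]
    _ ≤ (1 + K ^ 2 * (R + S) ^ 2) ^ n := pow_add_pow_le zero_le_one (by positivity) hn

end ModeConstants

/-- If `|ω_i| ≤ K·R^i` with `0 < R < 1`, `|ω_{−i}| ≤ K·S^i` with `S > 0`, `K > 1`, and
`0 < c < (1 + K²(R+S)²)^{−1/2}`, then `∑_{η,ν} |v_{η,ν}(ω)|²·c^{2‖ν‖} < ∞`, i.e. the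
operator `B(ω) = V(ω)·c^N` (with `N` the number operator) is Hilbert–Schmidt. -/
theorem stmt3 (ωp ωm : ℕ+ → ℂ) (K R S c : ℝ)
    (hK : 1 < K) (hR0 : 0 < R) (hR1 : R < 1) (hS : 0 < S)
    (hbp : ∀ i : ℕ+, ‖ωp i‖ ≤ K * R ^ (i : ℕ))
    (hbm : ∀ i : ℕ+, ‖ωm i‖ ≤ K * S ^ (i : ℕ))
    (hc0 : 0 < c) (hc1 : c < (Real.sqrt (1 + K ^ 2 * (R + S) ^ 2))⁻¹) :
    Summable (fun p : MultiIndex × MultiIndex =>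
      ‖vElem ωp ωm p.1 p.2‖ ^ 2 * c ^ (2 * miWt p.2)) := by
  set ρ := (1 + K ^ 2 * (R + S) ^ 2) * c ^ 2
  have hρ0 : 0 ≤ ρ := by positivity
  have hρ1 : ρ < 1 := by
    have h := pow_lt_pow_left₀ hc1 hc0.le two_ne_zero
    rw [inv_pow, Real.sq_sqrt (by positivity)] at h
    exact (lt_inv_mul_iff₀ (by positivity)).1 (by rwa [mul_one])
  have hmode (i : ℕ+) (u : Finset (ℕ × ℕ)) :
      ∑ q ∈ u, modeWeight (K * R ^ (i : ℕ)) (K * S ^ (i : ℕ)) ((c ^ 2) ^ (i : ℕ)) q.1 q.2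
        ≤ Real.exp (K ^ 2 * (R ^ 2) ^ (i : ℕ) + ρ ^ (i : ℕ) / (1 - ρ)) := by
    have hρi : ρ ^ (i : ℕ) ≤ ρ := pow_le_of_le_one hρ0 hρ1.le i.ne_zero
    refine (sum_modeWeight_le (by positivity) (one_add_sq_mul_pow_le hK.le hR0.le hS.le i.ne_zero)
      (pow_lt_one₀ hρ0 hρ1 i.ne_zero) u).trans ?_
    rw [Real.exp_add, show (K * R ^ (i : ℕ)) ^ 2 = K ^ 2 * (R ^ 2) ^ (i : ℕ) by ring]
    gcongr
    exact inv_one_sub_le_exp_div (by positivity) hρi hρ1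
  have hℓ : Summable fun i : ℕ+ => K ^ 2 * (R ^ 2) ^ (i : ℕ) + ρ ^ (i : ℕ) / (1 - ρ) :=
    (((summable_geometric_of_lt_one (by positivity) (by nlinarith)).mul_left (K ^ 2)).add
      ((summable_geometric_of_lt_one hρ0 hρ1).div_const (1 - ρ))).comp_injective PNat.coe_injective
  exact (summable_prod_support_union (fun i n m => modeWeight_nonneg (by positivity) n m)
    (fun i => modeWeight_zero_zero _ _ _) hmode hℓ).of_nonneg_of_le (fun p => by positivity)
    fun p => norm_vElem_sq_mul_pow_le hbp hbm c p.1 p.2
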